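/- For every pair (i, i') ∈ A with i ≠ ∅, the map ψ : F(i) → F(i') is well defined (i.e. ψ(j) ∈ F(i') for every j ∈ F(i)) and is a bijection from F(i) onto F(i'). -/
import Mathlib


/- Finite integer intervals: `none` = empty set, `some (l, r)` with `l ≤ r`
represents the interval {l, ..., r}. -/

namespace RFI

abbrev State := Option (ℤ × ℤ)

/-- The reflection ρ about -1/2: ρ({l, ..., r}) = {-1-r, ..., -1-l}, ρ(∅) = ∅. -/
def rho : State → State
  | none => none
  | some (l, r) => some (-1 - r, -1 - l)

/-- The set of integers represented by a state. -/
def toSet : State → Set ℤ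
  | none => ∅
  | some (l, r) => Set.Icc l r

/-- A state is valid when it is the empty set or a nonempty interval `some (l, r)`,
`l ≤ r`. -/
def IsValid (s : State) : Prop := s = none ∨ ∃ l r : ℤ, l ≤ r ∧ s = some (l, r)

/-- The pair (i, i') belongs to A: i' = ρ(i), and either i = i' = ∅, or i is a
nonempty interval with L(i) ≤ -1 and R(i) ≤ -1 - L(i). -/
def memA (i i' : State) : Prop :=
  i' = rho i ∧
    (i = none ∨ ∃ l r : ℤ, l ≤ r ∧ i = some (l, r) ∧ l ≤ -1 ∧ r ≤ -1 - l)

/-- `j ∈ F(i)`: j is an integer subinterval of i, including the empty set. -/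
def memF (i j : State) : Prop := IsValid j ∧ toSet j ⊆ toSet i

open Classical in
/-- The map ψ : F(i) → F(i'): ψ(j) = j if j = ∅ or j ⊆ i ∩ i', and ψ(j) = ρ(j)
otherwise. -/
noncomputable def psi (i i' j : State) : State :=
  if j = none ∨ toSet j ⊆ toSet i ∩ toSet i' then j else rho j

lemma rho_rho (s : State) : rho (rho s) = s := by
  cases s with
  | none => rfl
  | some p =>
    obtain ⟨l, r⟩ := p
    simp only [rho]
    congr 1 <;> ring_nf

lemma rho_ne_none {s : State} (h : s ≠ none) : rho s ≠ none := by
  cases s with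
  | none => exact absurd rfl h
  | some p => obtain ⟨l, r⟩ := p; simp [rho]

lemma mem_toSet_rho (s : State) (x : ℤ) : x ∈ toSet (rho s) ↔ -1 - x ∈ toSet s := by
  cases s with
  | none => simp [rho, toSet]
  | some p =>
    obtain ⟨l, r⟩ := p
    simp only [rho, toSet, Set.mem_Icc]
    omega

lemma toSet_rho_subset {a b : State} (h : toSet a ⊆ toSet b) :
    toSet (rho a) ⊆ toSet (rho b) := by
  intro x hx
  rw [mem_toSet_rho] at hx ⊢
  exact h hx

lemma toSet_rho_subset_iff (a b : State) :
    toSet (rho a) ⊆ toSet (rho b) ↔ toSet a ⊆ toSet b := by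
  refine ⟨fun h => ?_, toSet_rho_subset⟩
  have := toSet_rho_subset h
  rwa [rho_rho, rho_rho] at this

lemma isValid_rho {s : State} (h : IsValid s) : IsValid (rho s) := by
  rcases h with h | ⟨l, r, hlr, rfl⟩
  · subst h; exact Or.inl rfl
  · exact Or.inr ⟨-1 - r, -1 - l, by omega, rfl⟩

/-- The key symmetry: `ρ(j) ⊆ i ∩ ρ(i)` iff `j ⊆ i ∩ ρ(i)`. -/
lemma rho_subset_inter_iff (i j : State) :
    toSet (rho j) ⊆ toSet i ∩ toSet (rho i) ↔ toSet j ⊆ toSet i ∩ toSet (rho i) := by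
  rw [Set.subset_inter_iff, Set.subset_inter_iff]
  constructor
  · rintro ⟨h1, h2⟩
    refine ⟨(toSet_rho_subset_iff j i).mp h2, ?_⟩
    rw [← rho_rho i] at h1
    exact (toSet_rho_subset_iff j (rho i)).mp h1
  · rintro ⟨h1, h2⟩
    refine ⟨?_, toSet_rho_subset h1⟩
    have := toSet_rho_subset h2
    rwa [rho_rho] at this

lemma psi_mapsTo {a b : State} (hb : b = rho a) {j : State} (hj : memF a j) :
    memF b (psi a b j) := by
  obtain ⟨hv, hsub⟩ := hj
  by_cases hc : j = none ∨ toSet j ⊆ toSet a ∩ toSet b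
  · rw [psi, if_pos hc]
    rcases hc with rfl | hc
    · exact ⟨Or.inl rfl, by simp [toSet]⟩
    · exact ⟨hv, fun x hx => (hc hx).2⟩
  · rw [psi, if_neg hc]
    subst hb
    exact ⟨isValid_rho hv, toSet_rho_subset hsub⟩

lemma psi_psi {a b : State} (hb : b = rho a) (j : State) :
    psi b a (psi a b j) = j := by
  by_cases hc : j = none ∨ toSet j ⊆ toSet a ∩ toSet b
  · have h1 : psi a b j = j := by rw [psi, if_pos hc]
    rw [h1, psi, if_pos]
    rcases hc with rfl | hc
    · exact Or.inl rfl
    · exact Or.inr (by rwa [Set.inter_comm])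
  · have h1 : psi a b j = rho j := by rw [psi, if_neg hc]
    rw [h1, psi, if_neg, rho_rho]
    push_neg at hc
    rintro (h | h)
    · exact hc.1 (by simpa using (rho_ne_none hc.1) h)
    · rw [Set.inter_comm] at h
      subst hb
      rw [rho_subset_inter_iff] at h
      exact hc.2 h

/-- for (i, i') ∈ A with i ≠ ∅, the map ψ is well defined as a map
F(i) → F(i') and is a bijection from F(i) onto F(i'). -/
theorem psi_bijection (i i' : State) (hA : memA i i') (hne : i ≠ none) :
    (∀ j, memF i j → memF i' (psi i i' j)) ∧
    Set.BijOn (psi i i') {j | memF i j} {j | memF i' j} := by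
  obtain ⟨hb, -⟩ := hA
  have hi : i = rho i' := by rw [hb, rho_rho]
  refine ⟨fun j hj => psi_mapsTo hb hj, ?_⟩
  have hinv : Set.InvOn (psi i' i) (psi i i') {j | memF i j} {j | memF i' j} :=
    ⟨fun j _ => psi_psi hb j, fun j _ => psi_psi hi j⟩
  exact hinv.bijOn (fun j hj => psi_mapsTo hb hj) (fun j hj => psi_mapsTo hi hj)

end RFI
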